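/- arXiv:1512.02802 — 2 statements merged into one kernel-verified Lean document; each statement's English description precedes it below -/
import Mathlib

section
/- Let U_t = S^{(n,a)}(C_t ⊗ I_n), where C_t is any unitary coin on C^3, act on a state ρ whose matrix elements satisfy ⟨i, e_m| ρ |j, e_m⟩ = (1/3) a_m δ_{ij} in the basis of coin states |i⟩ tensored with Fourier eigenvectors |e_m⟩ of the shifts. Then U_t ρ U_t† satisfies the same property: ⟨i, e_m| U_t ρ U_t† |j, e_m⟩ = (1/3) a_m δ_{ij}. -/
open Matrix Kronecker Complex

def livelyDelta (n : ℕ) (a : ℕ) : Fin 3 → ZMod n :=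
  fun c => if c = 0 then -1 else if c = 1 then 1 else (a : ZMod n)

def livelyShift (n : ℕ) (a : ℕ) :
    Matrix (Fin 3 × ZMod n) (Fin 3 × ZMod n) ℂ :=
  fun p q => if p.1 = q.1 ∧ p.2 = q.2 + livelyDelta n a p.1 then 1 else 0

noncomputable def fourierVec (n : ℕ) : ZMod n → ZMod n → ℂ :=
  fun m x => (1 / Real.sqrt n) *
    Complex.exp (2 * Real.pi * Complex.I * m.val * x.val / n)

def coinTensor {n : ℕ} (i : Fin 3) (φ : ZMod n → ℂ) : Fin 3 × ZMod n → ℂ :=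
  fun p => (if p.1 = i then 1 else 0) * φ p.2

/-!
Write `v_k = |k⟩ ⊗ e_m`. The adjoint of the step operator maps the span of the `v_k` into itself:
the inverse shift translates the character `e_m` by `Δ_j`, which only multiplies it by a phase,
and `(C ⊗ I)ᴴ = Cᴴ ⊗ I` mixes the coin labels. On this span `U_tᴴ` therefore acts by the unitary
`V = C_tᴴ · diag(phases)`, and since the compression of `ρ` to the span is the scalar `a_m / 3`,
so is the compression of `U_t ρ U_tᴴ`, by `Vᴴ V = 1`.
-/

theorem Matrix.diagonal_mem_unitaryGroup {R ι : Type*} [CommRing R] [StarRing R] [Fintype ι]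
    [DecidableEq ι] (d : ι → R) (hd : ∀ i, star (d i) * d i = 1) :
    diagonal d ∈ unitaryGroup ι R := by
  rw [mem_unitaryGroup_iff', star_eq_conjTranspose, diagonal_conjTranspose, diagonal_mul_diagonal]
  simp only [Pi.star_apply, hd, diagonal_one]

theorem Circle.star_coe_mul_coe (z : Circle) : star (z : ℂ) * z = 1 := by
  rw [Complex.star_def, ← Circle.coe_inv_eq_conj, ← Circle.coe_mul, inv_mul_cancel, Circle.coe_one]

section Compression

variable {R ι P : Type*} [CommRing R] [StarRing R] [Fintype P]

theorem Matrix.star_dotProduct_mul_mul_conjTranspose_mulVec (U ρ : Matrix P P R) (x y : P → R) :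
    star x ⬝ᵥ (U * ρ * Uᴴ) *ᵥ y = star (Uᴴ *ᵥ x) ⬝ᵥ ρ *ᵥ (Uᴴ *ᵥ y) := by
  rw [Matrix.mul_assoc, ← mulVec_mulVec, dotProduct_mulVec, star_mulVec,
    conjTranspose_conjTranspose, mulVec_mulVec]

theorem Matrix.star_sum_smul_dotProduct_mulVec_sum_smul [Fintype ι] (ρ : Matrix P P R)
    (v : ι → P → R) (c d : ι → R) :
    star (∑ k, c k • v k) ⬝ᵥ ρ *ᵥ ∑ l, d l • v l =
      ∑ k, ∑ l, star (c k) * d l * (star (v k) ⬝ᵥ ρ *ᵥ v l) := by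
  simp only [star_sum, star_smul, mulVec_sum, mulVec_smul, sum_dotProduct, dotProduct_sum,
    smul_dotProduct, dotProduct_smul, smul_eq_mul, Finset.mul_sum]
  rw [Finset.sum_comm]
  exact Finset.sum_congr rfl fun k _ => Finset.sum_congr rfl fun l _ => by ring

theorem Matrix.star_dotProduct_mul_mul_conjTranspose_mulVec_of_unitary [Fintype ι] [DecidableEq ι]
    (U ρ : Matrix P P R) (v : ι → P → R) (V : Matrix ι ι R) (hV : V ∈ unitaryGroup ι R)
    (hU : ∀ j, Uᴴ *ᵥ v j = ∑ k, V k j • v k) (α : R)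
    (hρ : ∀ i j, star (v i) ⬝ᵥ ρ *ᵥ v j = α * if i = j then 1 else 0) (i j : ι) :
    star (v i) ⬝ᵥ (U * ρ * Uᴴ) *ᵥ v j = α * if i = j then 1 else 0 := by
  have hVV : ∑ k, star (V k i) * V k j = if i = j then 1 else 0 := by
    rw [← one_apply, ← (mem_unitaryGroup_iff').mp hV, mul_apply]; rfl
  simp only [star_dotProduct_mul_mul_conjTranspose_mulVec, hU,
    star_sum_smul_dotProduct_mulVec_sum_smul, hρ, mul_ite, mul_one, mul_zero,
    Finset.sum_ite_eq, Finset.mem_univ, if_true]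
  rw [← Finset.sum_mul, hVV, ite_mul, one_mul, zero_mul]

end Compression

open ZMod in
theorem fourierVec_eq_toCircle (n : ℕ) [NeZero n] (m x : ZMod n) :
    fourierVec n m x = (Real.sqrt n : ℂ)⁻¹ * toCircle (m * x) := by
  rw [fourierVec, ← natCast_zmod_val m, ← natCast_zmod_val x, ← Nat.cast_mul, toCircle_natCast]
  push_cast [natCast_zmod_val]
  ring_nf

theorem fourierVec_add (n : ℕ) [NeZero n] (m x d : ZMod n) :
    fourierVec n m (x + d) = ZMod.toCircle (m * d) * fourierVec n m x := by
  simp only [fourierVec_eq_toCircle, mul_add, AddChar.map_add_eq_mul, Circle.coe_mul]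
  ring

section Walk

variable {n : ℕ}

theorem coinTensor_smul (j : Fin 3) (c : ℂ) (φ : ZMod n → ℂ) :
    coinTensor j (c • φ) = c • coinTensor j φ := by
  funext p
  simp only [coinTensor, Pi.smul_apply, smul_eq_mul]
  ring

theorem kronecker_one_mulVec_coinTensor [NeZero n] (A : Matrix (Fin 3) (Fin 3) ℂ) (j : Fin 3)
    (φ : ZMod n → ℂ) :
    (A ⊗ₖ (1 : Matrix (ZMod n) (ZMod n) ℂ)) *ᵥ coinTensor j φ = ∑ k, A k j • coinTensor k φ := by
  funext p
  simp [mulVec, dotProduct, Fintype.sum_prod_type, coinTensor, kroneckerMap_apply, one_apply,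
    Finset.sum_apply]

theorem livelyShift_conjTranspose_mulVec_coinTensor [NeZero n] (a : ℕ) (j : Fin 3)
    (φ : ZMod n → ℂ) :
    (livelyShift n a)ᴴ *ᵥ coinTensor j φ = coinTensor j (fun x => φ (x + livelyDelta n a j)) := by
  funext p
  obtain ⟨c, x⟩ := p
  by_cases hc : c = j
  · subst hc
    simp [mulVec, dotProduct, Fintype.sum_prod_type, coinTensor, livelyShift]
  · simp [mulVec, dotProduct, Fintype.sum_prod_type, coinTensor, livelyShift, hc, Ne.symm hc]

theorem livelyStep_conjTranspose_mulVec_coinTensor_fourierVec [NeZero n] (a : ℕ)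
    (Ct : Matrix (Fin 3) (Fin 3) ℂ) (j : Fin 3) (m : ZMod n) :
    (livelyShift n a * (Ct ⊗ₖ (1 : Matrix (ZMod n) (ZMod n) ℂ)))ᴴ *ᵥ coinTensor j (fourierVec n m) =
      ∑ k, (Ctᴴ * diagonal fun c => (ZMod.toCircle (m * livelyDelta n a c) : ℂ)) k j •
        coinTensor k (fourierVec n m) := by
  have hshift : (fun x => fourierVec n m (x + livelyDelta n a j)) =
      (ZMod.toCircle (m * livelyDelta n a j) : ℂ) • fourierVec n m :=
    funext fun x => fourierVec_add n m x _
  rw [conjTranspose_mul, ← mulVec_mulVec, livelyShift_conjTranspose_mulVec_coinTensor, hshift,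
    coinTensor_smul, mulVec_smul, conjTranspose_kronecker, conjTranspose_one,
    kronecker_one_mulVec_coinTensor, Finset.smul_sum]
  simp only [smul_smul, mul_diagonal, mul_comm]

end Walk

theorem matrix_elements_invariant_under_step_general (n : ℕ) [NeZero n] (a : ℕ)
    (Ct : Matrix (Fin 3) (Fin 3) ℂ)
    (hC : Ct ∈ Matrix.unitaryGroup (Fin 3) ℂ)
    (ρ : Matrix (Fin 3 × ZMod n) (Fin 3 × ZMod n) ℂ) (am : ZMod n → ℂ)
    (hρ : ∀ (i j : Fin 3) (m : ZMod n),
      star (coinTensor i (fourierVec n m)) ⬝ᵥ ρ.mulVec (coinTensor j (fourierVec n m)) =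
        (1 / 3 : ℂ) * am m * (if i = j then 1 else 0)) :
    ∀ (i j : Fin 3) (m : ZMod n),
      star (coinTensor i (fourierVec n m)) ⬝ᵥ
        ((livelyShift n a * (Ct ⊗ₖ (1 : Matrix (ZMod n) (ZMod n) ℂ))) * ρ *
          (livelyShift n a * (Ct ⊗ₖ (1 : Matrix (ZMod n) (ZMod n) ℂ)))ᴴ).mulVec
          (coinTensor j (fourierVec n m)) =
        (1 / 3 : ℂ) * am m * (if i = j then 1 else 0) := by
  intro i j m
  have hV : (Ctᴴ * diagonal fun c => (ZMod.toCircle (m * livelyDelta n a c) : ℂ)) ∈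
      unitaryGroup (Fin 3) ℂ :=
    mul_mem (Unitary.star_mem hC) (diagonal_mem_unitaryGroup _ fun _ => Circle.star_coe_mul_coe _)
  exact star_dotProduct_mul_mul_conjTranspose_mulVec_of_unitary _ ρ _ _ hV
    (livelyStep_conjTranspose_mulVec_coinTensor_fourierVec a Ct · m) _ (hρ · · m) i j

theorem matrix_elements_invariant_under_step (n : ℕ) [NeZero n] (a : ℕ)
    (ha : a ≤ n - 1) (Ct : Matrix (Fin 3) (Fin 3) ℂ)
    (hC : Ct ∈ Matrix.unitaryGroup (Fin 3) ℂ)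
    (ρ : Matrix (Fin 3 × ZMod n) (Fin 3 × ZMod n) ℂ) (am : ZMod n → ℂ)
    (hρ : ∀ (i j : Fin 3) (m : ZMod n),
      star (coinTensor i (fourierVec n m)) ⬝ᵥ ρ.mulVec (coinTensor j (fourierVec n m)) =
        (1 / 3 : ℂ) * am m * (if i = j then 1 else 0)) :
    ∀ (i j : Fin 3) (m : ZMod n),
      star (coinTensor i (fourierVec n m)) ⬝ᵥ
        ((livelyShift n a * (Ct ⊗ₖ (1 : Matrix (ZMod n) (ZMod n) ℂ))) * ρ *
          (livelyShift n a * (Ct ⊗ₖ (1 : Matrix (ZMod n) (ZMod n) ℂ)))ᴴ).mulVec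
          (coinTensor j (fourierVec n m)) =
        (1 / 3 : ℂ) * am m * (if i = j then 1 else 0) :=
  matrix_elements_invariant_under_step_general n a Ct hC ρ am hρ
end

section
/- Consider the lively quantum walk with liveliness a ≠ 0, arbitrary time-dependent unitary coins C_t, and initial state ρ₀ = (I₃/3) ⊗ |x₀⟩⟨x₀|. Then the expected position (measured as a winding/displacement, not modulo n) drifts at constant rate: E(X^{ρ_{t+1}}) − E(X^{ρ_t}) = a/3 ≠ 0 for all t. In particular, the walk cannot be trapped. -/
open Matrix Kronecker Complex

def posKet (n : ℕ) (x₀ : ZMod n) : ZMod n → ℂ := fun x => if x = x₀ then 1 else 0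

/-- The initial state `ρ₀ = (I₃/3) ⊗ |x₀⟩⟨x₀|`. -/
noncomputable def rhoInit (n : ℕ) (x₀ : ZMod n) :
    Matrix (Fin 3 × ZMod n) (Fin 3 × ZMod n) ℂ :=
  ((1 : ℝ) / 3 : ℂ) • ((1 : Matrix (Fin 3) (Fin 3) ℂ) ⊗ₖ
    Matrix.vecMulVec (posKet n x₀) (star (posKet n x₀)))

/-- The (integer-valued) displacement associated with each coin value. -/
def intDelta (a : ℕ) : Fin 3 → ℤ := ![-1, 1, (a : ℤ)]

/-- Expected (ℤ-lifted) one-step displacement of the walker in state `ρ`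
just before the shift, i.e. after the coin operation `Ct` has been applied:
probability of coin outcome `c` times the displacement `Δ_c`, summed. -/
noncomputable def expectedDrift (n : ℕ) [NeZero n] (a : ℕ)
    (Ct : Matrix (Fin 3) (Fin 3) ℂ)
    (ρ : Matrix (Fin 3 × ZMod n) (Fin 3 × ZMod n) ℂ) : ℝ :=
  ∑ c : Fin 3, (intDelta a c : ℝ) * ∑ x : ZMod n,
    (((Ct ⊗ₖ (1 : Matrix (ZMod n) (ZMod n) ℂ)) * ρ *
      (Ct ⊗ₖ (1 : Matrix (ZMod n) (ZMod n) ℂ))ᴴ) (c, x) (c, x)).re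

/-!
The invariant is the family of coin correlations `∑ x, ρ (i, x) (j, x + d)`, which equal
`δ_ij δ_d0 / 3` at all times. A coin step conjugates each of these `3 × 3` matrices by the unitary
`C_t`, which fixes scalar matrices. After a shift step the entry `(i, j)` at offset `d` is the old one
at offset `d + δ i - δ j`: diagonal entries are unchanged, and off-diagonal ones vanish at every
offset. At `d = 0` the correlation is the reduced coin state, so after every coin step each coin
value has probability `1/3` and the expected displacement is `(-1 + 1 + a) / 3`.
-/

section KroneckerOne

variable {R ι G : Type*} [CommSemiring R] [Fintype ι] [Fintype G] [DecidableEq G]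

lemma kronecker_one_mul_apply (C : Matrix ι ι R) (ρ : Matrix (ι × G) (ι × G) R)
    (i : ι) (x : G) (q : ι × G) :
    ((C ⊗ₖ (1 : Matrix G G R)) * ρ) (i, x) q = ∑ k, C i k * ρ (k, x) q := by
  simp [mul_apply, Fintype.sum_prod_type, one_apply]

lemma mul_kronecker_one_apply (ρ : Matrix (ι × G) (ι × G) R) (D : Matrix ι ι R)
    (p : ι × G) (j : ι) (y : G) :
    (ρ * (D ⊗ₖ (1 : Matrix G G R))) p (j, y) = ∑ l, ρ p (l, y) * D l j := by
  simp [mul_apply, Fintype.sum_prod_type, one_apply]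

end KroneckerOne

section CoinCorrelation

variable {R ι G : Type*} [CommSemiring R] [AddCommGroup G] [Fintype G]

def coinCorrelation (ρ : Matrix (ι × G) (ι × G) R) (d : G) : Matrix ι ι R :=
  of fun i j => ∑ x, ρ (i, x) (j, x + d)

lemma coinCorrelation_smul (c : R) (ρ : Matrix (ι × G) (ι × G) R) :
    coinCorrelation (c • ρ) = c • coinCorrelation ρ := by
  ext d i j
  simp [coinCorrelation, Finset.mul_sum]

lemma coinCorrelation_kronecker (A : Matrix ι ι R) (B : Matrix G G R) (d : G) :
    coinCorrelation (A ⊗ₖ B) d = (∑ x, B x (x + d)) • A := by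
  ext i j
  simp [coinCorrelation, Finset.mul_sum, mul_comm]

variable [Fintype ι] [DecidableEq G]

lemma coinCorrelation_kronecker_one_mul_mul (C D : Matrix ι ι R)
    (ρ : Matrix (ι × G) (ι × G) R) (d : G) :
    coinCorrelation ((C ⊗ₖ (1 : Matrix G G R)) * ρ * (D ⊗ₖ 1)) d =
      C * coinCorrelation ρ d * D := by
  ext i j
  simp only [coinCorrelation, of_apply, Matrix.mul_assoc, mul_kronecker_one_apply]
  simp only [kronecker_one_mul_apply]
  simp only [mul_apply, Finset.sum_mul, Finset.mul_sum, of_apply, mul_assoc]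
  rw [Finset.sum_comm_cycle]
  exact Finset.sum_congr rfl fun k _ => Finset.sum_comm

variable [DecidableEq ι]

lemma coinCorrelation_kronecker_one_conj_eq_single [StarRing R] {C : Matrix ι ι R}
    (hC : C * Cᴴ = 1) {ρ : Matrix (ι × G) (ι × G) R} {c : R}
    (h : coinCorrelation ρ = Pi.single 0 (c • 1)) :
    coinCorrelation ((C ⊗ₖ (1 : Matrix G G R)) * ρ * (C ⊗ₖ (1 : Matrix G G R))ᴴ) =
      Pi.single 0 (c • 1) := by
  ext d : 1
  rw [conjTranspose_kronecker, conjTranspose_one, coinCorrelation_kronecker_one_mul_mul, h]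
  by_cases hd : d = 0
  · subst hd
    simp [hC]
  · simp [hd]

variable (R) in
def coinShift (δ : ι → G) : Matrix (ι × G) (ι × G) R :=
  of fun p q => if p.1 = q.1 ∧ p.2 = q.2 + δ p.1 then 1 else 0

lemma coinShift_mul_mul_conjTranspose_apply [StarRing R] (δ : ι → G)
    (M : Matrix (ι × G) (ι × G) R) (i j : ι) (x y : G) :
    (coinShift R δ * M * (coinShift R δ)ᴴ) (i, x) (j, y) = M (i, x - δ i) (j, y - δ j) := by
  simp only [mul_apply, conjTranspose_apply, coinShift, of_apply, Fintype.sum_prod_type,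
    ← sub_eq_iff_eq_add, ite_and]
  simp [apply_ite star, eq_comm]

lemma coinCorrelation_coinShift_conj_apply [StarRing R] (δ : ι → G)
    (M : Matrix (ι × G) (ι × G) R) (d : G) (i j : ι) :
    coinCorrelation (coinShift R δ * M * (coinShift R δ)ᴴ) d i j =
      coinCorrelation M (d + δ i - δ j) i j := by
  simp only [coinCorrelation, of_apply, coinShift_mul_mul_conjTranspose_apply]
  rw [← Equiv.sum_comp (Equiv.addRight (δ i))]
  refine Finset.sum_congr rfl fun x _ => ?_
  simp only [Equiv.coe_addRight]
  congr 2 <;> abel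

lemma coinCorrelation_coinShift_conj_eq_single [StarRing R] (δ : ι → G)
    {M : Matrix (ι × G) (ι × G) R} {c : R} (h : coinCorrelation M = Pi.single 0 (c • 1)) :
    coinCorrelation (coinShift R δ * M * (coinShift R δ)ᴴ) = Pi.single 0 (c • 1) := by
  ext d i j
  rw [coinCorrelation_coinShift_conj_apply, h]
  by_cases hij : i = j
  · subst hij
    simp
  · simp only [Pi.single_apply]
    split_ifs <;> simp [hij]

end CoinCorrelation

lemma livelyShift_eq_coinShift (n a : ℕ) : livelyShift n a = coinShift ℂ (livelyDelta n a) := rfl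

lemma sum_posKet_mul_star_posKet_add (n : ℕ) [NeZero n] (x₀ d : ZMod n) :
    ∑ x, posKet n x₀ x * star (posKet n x₀ (x + d)) = if d = 0 then 1 else 0 := by
  rw [Fintype.sum_eq_single x₀ fun x hx => by simp [posKet, hx]]
  simp [posKet]

lemma coinCorrelation_rhoInit (n : ℕ) [NeZero n] (x₀ : ZMod n) :
    coinCorrelation (rhoInit n x₀) = Pi.single 0 (((1 / 3 : ℝ) : ℂ) • 1) := by
  ext d : 1
  rw [rhoInit, coinCorrelation_smul, Pi.smul_apply, coinCorrelation_kronecker]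
  simp only [vecMulVec_apply, Pi.star_apply, sum_posKet_mul_star_posKet_add]
  by_cases hd : d = 0 <;> simp [hd]

lemma expectedDrift_eq_of_coinCorrelation (n : ℕ) [NeZero n] (a : ℕ)
    (C : Matrix (Fin 3) (Fin 3) ℂ) (ρ : Matrix (Fin 3 × ZMod n) (Fin 3 × ZMod n) ℂ) (r : ℝ)
    (h : coinCorrelation ((C ⊗ₖ (1 : Matrix (ZMod n) (ZMod n) ℂ)) * ρ *
      (C ⊗ₖ (1 : Matrix (ZMod n) (ZMod n) ℂ))ᴴ) = Pi.single 0 ((r : ℂ) • 1)) :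
    expectedDrift n a C ρ = a * r := by
  rw [expectedDrift]
  set σ := (C ⊗ₖ (1 : Matrix (ZMod n) (ZMod n) ℂ)) * ρ * (C ⊗ₖ 1)ᴴ
  have hdiag (c : Fin 3) : ∑ x, (σ (c, x) (c, x)).re = r := by
    have hc := congrFun₂ (congrFun h 0) c c
    simp only [coinCorrelation, of_apply, add_zero, Pi.single_eq_same, Matrix.smul_apply,
      one_apply_eq] at hc
    rw [← Complex.re_sum, hc, smul_eq_mul, mul_one, Complex.ofReal_re]
  simp only [hdiag, Fin.sum_univ_three]
  simp [intDelta]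

theorem lively_walk_cannot_be_trapped_general (n : ℕ) [NeZero n] (a : ℕ)
    (ha0 : a ≠ 0) (x₀ : ZMod n)
    (Ct : ℕ → Matrix (Fin 3) (Fin 3) ℂ)
    (hCt : ∀ t, Ct t ∈ Matrix.unitaryGroup (Fin 3) ℂ)
    (ρ : ℕ → Matrix (Fin 3 × ZMod n) (Fin 3 × ZMod n) ℂ)
    (hρ0 : ρ 0 = rhoInit n x₀)
    (hρ : ∀ t, ρ (t + 1) =
      (livelyShift n a * (Ct t ⊗ₖ (1 : Matrix (ZMod n) (ZMod n) ℂ))) * ρ t *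
      (livelyShift n a * (Ct t ⊗ₖ (1 : Matrix (ZMod n) (ZMod n) ℂ)))ᴴ) :
    ∀ t : ℕ, expectedDrift n a (Ct t) (ρ t) = (a : ℝ) / 3 ∧ (a : ℝ) / 3 ≠ 0 := by
  have hinv : ∀ t, coinCorrelation (ρ t) = Pi.single 0 (((1 / 3 : ℝ) : ℂ) • 1) := by
    intro t
    induction t with
    | zero => rw [hρ0]; exact coinCorrelation_rhoInit n x₀
    | succ t ih =>
      rw [hρ t, conjTranspose_mul, livelyShift_eq_coinShift]
      simpa only [Matrix.mul_assoc] using coinCorrelation_coinShift_conj_eq_single _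
        (coinCorrelation_kronecker_one_conj_eq_single (mem_unitaryGroup_iff.mp (hCt t)) ih)
  intro t
  refine ⟨?_, div_ne_zero (Nat.cast_ne_zero.mpr ha0) three_ne_zero⟩
  rw [expectedDrift_eq_of_coinCorrelation n a (Ct t) (ρ t) (1 / 3)
    (coinCorrelation_kronecker_one_conj_eq_single (mem_unitaryGroup_iff.mp (hCt t)) (hinv t))]
  ring

theorem lively_walk_cannot_be_trapped (n : ℕ) [NeZero n] (a : ℕ)
    (ha : a ≤ n - 1) (ha0 : a ≠ 0) (x₀ : ZMod n)
    (Ct : ℕ → Matrix (Fin 3) (Fin 3) ℂ)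
    (hCt : ∀ t, Ct t ∈ Matrix.unitaryGroup (Fin 3) ℂ)
    (ρ : ℕ → Matrix (Fin 3 × ZMod n) (Fin 3 × ZMod n) ℂ)
    (hρ0 : ρ 0 = rhoInit n x₀)
    (hρ : ∀ t, ρ (t + 1) =
      (livelyShift n a * (Ct t ⊗ₖ (1 : Matrix (ZMod n) (ZMod n) ℂ))) * ρ t *
      (livelyShift n a * (Ct t ⊗ₖ (1 : Matrix (ZMod n) (ZMod n) ℂ)))ᴴ) :
    ∀ t : ℕ, expectedDrift n a (Ct t) (ρ t) = (a : ℝ) / 3 ∧ (a : ℝ) / 3 ≠ 0 :=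
  lively_walk_cannot_be_trapped_general n a ha0 x₀ Ct hCt ρ hρ0 hρ
end
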